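/- For every even integer p ≥ 2, the biclique covering number of the square grid graph G_{p,p} equals p²/2 − 1. -/

import Mathlib

/-- The grid graph `G_{p,q}` with vertex set `{1,…,q} × {1,…,p}` (modelled as
`Fin q × Fin p`), where two vertices are adjacent iff their coordinates differ
by a total of 1. -/
def gridGraph (p q : ℕ) : SimpleGraph (Fin q × Fin p) where
  Adj v w := Nat.dist (v.1 : ℕ) (w.1 : ℕ) + Nat.dist (v.2 : ℕ) (w.2 : ℕ) = 1
  symm := by
    constructor
    intro v w h
    rwa [Nat.dist_comm ((w.1 : ℕ)), Nat.dist_comm ((w.2 : ℕ))]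
  loopless := by
    constructor
    intro v h
    simp [Nat.dist_self] at h

/-- `H` is a biclique of `G`: a subgraph of `G` that is a complete bipartite
graph with parts `A` and `B`. -/
def IsBiclique {V : Type*} (G H : SimpleGraph V) : Prop :=
  H ≤ G ∧ ∃ A B : Set V, ∀ v w, H.Adj v w ↔ (v ∈ A ∧ w ∈ B) ∨ (v ∈ B ∧ w ∈ A)

/-- The biclique covering number of `G`: the least `n` such that `n` bicliques
of `G` cover all edges of `G`. -/
noncomputable def bcn {V : Type*} (G : SimpleGraph V) : ℕ :=
  sInf {n | ∃ H : Fin n → SimpleGraph V,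
    (∀ i, IsBiclique G (H i)) ∧ ∀ e ∈ G.edgeSet, ∃ i, e ∈ (H i).edgeSet}


/-!
The grid is bipartite by the parity of `x + y`, and every edge has exactly one endpoint of odd
parity. The stars at the odd vertices off the antidiagonal `x + y = p - 1`, together with the
`p - 1` unit squares straddling that antidiagonal (each a `K₂,₂`), therefore cover all edges with
`p²/2 - p + (p - 1)` bicliques.

Conversely, two edges lying in a common biclique either share a vertex or are opposite sides of a
unit square. The boundaries of the `p/2` concentric squares of the grid carry perfect matchings
whose edges alternate in parity from one ring to the next, so that no two of them are opposite
sides of a unit square; dropping one edge of the innermost `4`-cycle leaves a fooling set of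
`∑ₖ (4k + 2) - 1 = p²/2 - 1` edges, one for each biclique of any cover.
-/

section Biclique

variable {V : Type*} {G : SimpleGraph V}

def bicliqueOn (A B : Set V) : SimpleGraph V :=
  SimpleGraph.fromRel fun v w => v ∈ A ∧ w ∈ B

theorem bicliqueOn_adj {A B : Set V} {v w : V} :
    (bicliqueOn A B).Adj v w ↔ v ≠ w ∧ (v ∈ A ∧ w ∈ B ∨ w ∈ A ∧ v ∈ B) :=
  SimpleGraph.fromRel_adj _ v w

theorem isBiclique_bicliqueOn {A B : Set V} (h : ∀ a ∈ A, ∀ b ∈ B, G.Adj a b) :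
    IsBiclique G (bicliqueOn A B) := by
  refine ⟨fun v w hvw => ?_, A, B, fun v w => ?_⟩
  · obtain ⟨-, ⟨hv, hw⟩ | ⟨hw, hv⟩⟩ := bicliqueOn_adj.1 hvw
    exacts [h v hv w hw, (h w hw v hv).symm]
  · rw [bicliqueOn_adj]
    constructor
    · rintro ⟨-, hvw | ⟨hw, hv⟩⟩
      exacts [Or.inl hvw, Or.inr ⟨hv, hw⟩]
    · rintro (⟨hv, hw⟩ | ⟨hv, hw⟩)
      exacts [⟨(h v hv w hw).ne, Or.inl ⟨hv, hw⟩⟩,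
        ⟨(h w hw v hv).ne', Or.inr ⟨hw, hv⟩⟩]

def star (G : SimpleGraph V) (w : V) : SimpleGraph V :=
  bicliqueOn {w} (G.neighborSet w)

theorem isBiclique_star (w : V) : IsBiclique G (star G w) :=
  isBiclique_bicliqueOn fun _ ha _ hb => (Set.mem_singleton_iff.1 ha) ▸ hb

theorem star_adj {w v : V} (h : G.Adj w v) : (star G w).Adj w v :=
  bicliqueOn_adj.2 ⟨h.ne, Or.inl ⟨rfl, h⟩⟩

/-- The edges `uv` and `xy` share a vertex or are opposite sides of a `4`-cycle. -/
def EdgesLinked (G : SimpleGraph V) (u v x y : V) : Prop :=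
  G.Adj u x ∧ G.Adj v y ∨ G.Adj u y ∧ G.Adj v x

theorem IsBiclique.edgesLinked {H : SimpleGraph V} (hH : IsBiclique G H) {u v x y : V}
    (huv : H.Adj u v) (hxy : H.Adj x y) : EdgesLinked G u v x y := by
  obtain ⟨hle, A, B, hAB⟩ := hH
  have adj : ∀ a b, a ∈ A ∧ b ∈ B ∨ a ∈ B ∧ b ∈ A → G.Adj a b := fun a b hab =>
    hle ((hAB a b).2 hab)
  rcases (hAB u v).1 huv with ⟨hu, hv⟩ | ⟨hu, hv⟩ <;>
    rcases (hAB x y).1 hxy with ⟨hx, hy⟩ | ⟨hx, hy⟩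
  · exact .inr ⟨adj u y (.inl ⟨hu, hy⟩), adj v x (.inr ⟨hv, hx⟩)⟩
  · exact .inl ⟨adj u x (.inl ⟨hu, hx⟩), adj v y (.inr ⟨hv, hy⟩)⟩
  · exact .inl ⟨adj u x (.inr ⟨hu, hx⟩), adj v y (.inl ⟨hv, hy⟩)⟩
  · exact .inr ⟨adj u y (.inr ⟨hu, hy⟩), adj v x (.inl ⟨hv, hx⟩)⟩

def IsFoolingFamily {κ : Type*} (G : SimpleGraph V) (u v : κ → V) : Prop :=
  (∀ i, G.Adj (u i) (v i)) ∧ Pairwise fun i j => ¬EdgesLinked G (u i) (v i) (u j) (v j)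

theorem IsFoolingFamily.of_embedding {κ W : Type*} {G' : SimpleGraph W} (f : G ↪g G')
    {u v : κ → V} (h : IsFoolingFamily G' (f ∘ u) (f ∘ v)) : IsFoolingFamily G u v := by
  simpa only [IsFoolingFamily, EdgesLinked, Function.comp_apply, f.map_adj_iff] using h

def IsBicliqueCover {ι : Type*} (G : SimpleGraph V) (H : ι → SimpleGraph V) : Prop :=
  (∀ i, IsBiclique G (H i)) ∧ ∀ e ∈ G.edgeSet, ∃ i, e ∈ (H i).edgeSet

namespace IsBicliqueCover

variable {ι κ : Type*} [Fintype ι] {H : ι → SimpleGraph V}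

theorem exists_fin (hH : IsBicliqueCover G H) :
    ∃ H' : Fin (Fintype.card ι) → SimpleGraph V, IsBicliqueCover G H' := by
  refine ⟨H ∘ (Fintype.equivFin ι).symm, fun i => hH.1 _, fun e he => ?_⟩
  obtain ⟨i, hi⟩ := hH.2 e he
  exact ⟨Fintype.equivFin ι i, by simpa using hi⟩

theorem bcn_le (hH : IsBicliqueCover G H) : bcn G ≤ Fintype.card ι :=
  Nat.sInf_le hH.exists_fin

theorem card_le [Fintype κ] (hH : IsBicliqueCover G H) {u v : κ → V}
    (hF : IsFoolingFamily G u v) : Fintype.card κ ≤ Fintype.card ι := by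
  choose c hc using fun k => hH.2 s(u k, v k) (hF.1 k)
  refine Fintype.card_le_of_injective c fun k l hkl => by_contra fun hne => hF.2 hne ?_
  exact (hH.1 (c k)).edgesLinked (hc k) (hkl ▸ hc l)

theorem card_le_bcn [Fintype κ] (hH : IsBicliqueCover G H) {u v : κ → V}
    (hF : IsFoolingFamily G u v) : Fintype.card κ ≤ bcn G := by
  obtain ⟨H', hH'⟩ : ∃ H' : Fin (bcn G) → SimpleGraph V, IsBicliqueCover G H' :=
    Nat.sInf_mem (s := {n | ∃ H' : Fin n → SimpleGraph V, IsBicliqueCover G H'})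
      ⟨_, hH.exists_fin⟩
  simpa using hH'.card_le hF

end IsBicliqueCover

end Biclique

section Cover

variable {p q : ℕ}

def unitSquare (p q i j : ℕ) : Set (Fin q × Fin p) :=
  {v | i ≤ v.1 ∧ (v.1 : ℕ) ≤ i + 1 ∧ j ≤ v.2 ∧ (v.2 : ℕ) ≤ j + 1}

/-- The `4`-cycle around a unit square, as the biclique between its two diagonals. -/
def squareBiclique (p q i j : ℕ) : SimpleGraph (Fin q × Fin p) :=
  bicliqueOn (unitSquare p q i j ∩ {v | (v.1 + v.2 + i + j : ℕ) % 2 = 0})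
    (unitSquare p q i j ∩ {v | (v.1 + v.2 + i + j : ℕ) % 2 = 1})

theorem isBiclique_squareBiclique (i j : ℕ) :
    IsBiclique (gridGraph p q) (squareBiclique p q i j) := by
  refine isBiclique_bicliqueOn fun a ⟨ha, ha'⟩ b ⟨hb, hb'⟩ => ?_
  simp only [unitSquare, Set.mem_ofPred_eq] at ha ha' hb hb'
  change Nat.dist _ _ + Nat.dist _ _ = 1
  simp only [Nat.dist]
  omega

theorem squareBiclique_adj {i j : ℕ} {u v : Fin q × Fin p} (huv : (gridGraph p q).Adj u v)
    (hu : u ∈ unitSquare p q i j) (hv : v ∈ unitSquare p q i j) :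
    (squareBiclique p q i j).Adj u v := by
  change Nat.dist _ _ + Nat.dist _ _ = 1 at huv
  simp only [unitSquare, Nat.dist, Set.mem_ofPred_eq] at hu hv huv
  simp only [squareBiclique, bicliqueOn_adj, Set.mem_inter_iff, unitSquare, Set.mem_ofPred_eq,
    ne_eq, Prod.ext_iff, Fin.ext_iff]
  omega

def OddOffDiagonal (p : ℕ) : Type :=
  {v : Fin p × Fin p // (v.1 + v.2 : ℕ) % 2 = 1 ∧ (v.1 + v.2 : ℕ) + 1 ≠ p}

instance : Fintype (OddOffDiagonal p) := Subtype.fintype _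

def gridCover (p : ℕ) : Fin (p - 1) ⊕ OddOffDiagonal p → SimpleGraph (Fin p × Fin p)
  | .inl i => squareBiclique p p i (p - 2 - i)
  | .inr w => star (gridGraph p p) w.1

theorem exists_antidiagonal_square {u v : Fin p × Fin p} (huv : (gridGraph p p).Adj u v)
    (hu : (u.1 + u.2 : ℕ) + 1 = p) :
    ∃ i : Fin (p - 1),
      u ∈ unitSquare p p i (p - 2 - i) ∧ v ∈ unitSquare p p i (p - 2 - i) := by
  change Nat.dist _ _ + Nat.dist _ _ = 1 at huv
  simp only [unitSquare, Nat.dist, Set.mem_ofPred_eq] at huv ⊢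
  by_cases hx : (u.1 : ℕ) = v.1
  · exact ⟨⟨p - 2 - min (u.2 : ℕ) v.2, by omega⟩, by dsimp only; omega⟩
  · exact ⟨⟨min (u.1 : ℕ) v.1, by omega⟩, by dsimp only; omega⟩

theorem exists_gridCover_adj {u v : Fin p × Fin p} (huv : (gridGraph p p).Adj u v)
    (hu : (u.1 + u.2 : ℕ) % 2 = 1) : ∃ c, (gridCover p c).Adj u v := by
  by_cases hdiag : (u.1 + u.2 : ℕ) + 1 = p
  · obtain ⟨i, hui, hvi⟩ := exists_antidiagonal_square huv hdiag
    exact ⟨.inl i, squareBiclique_adj huv hui hvi⟩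
  · exact ⟨.inr ⟨u, hu, hdiag⟩, star_adj huv⟩

theorem isBicliqueCover_gridCover : IsBicliqueCover (gridGraph p p) (gridCover p) := by
  refine ⟨fun c => ?_, fun e he => ?_⟩
  · cases c
    exacts [isBiclique_squareBiclique _ _, isBiclique_star _]
  induction e using Sym2.ind with
  | h u v =>
    have huv : Nat.dist _ _ + Nat.dist _ _ = 1 := he
    simp only [SimpleGraph.mem_edgeSet] at he ⊢
    by_cases hu : (u.1 + u.2 : ℕ) % 2 = 1
    · exact exists_gridCover_adj he hu
    · obtain ⟨c, hc⟩ := exists_gridCover_adj he.symm (by simp only [Nat.dist] at huv; omega)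
      exact ⟨c, hc.symm⟩

/-- In each row exactly one of the `r` odd vertices lies on the antidiagonal. -/
theorem card_oddOffDiagonal_le (r : ℕ) :
    Fintype.card (OddOffDiagonal (2 * r)) ≤ 2 * r * (r - 1) := by
  let f : OddOffDiagonal (2 * r) → Fin (2 * r) × Fin (r - 1) := fun w =>
    (w.1.1, ⟨if (w.1.1 + w.1.2 : ℕ) + 1 < 2 * r then w.1.2 / 2 else w.1.2 / 2 - 1, by
      have := w.1.2.isLt; have := w.2; split_ifs <;> omega⟩)
  have hf : Function.Injective f := by
    rintro ⟨⟨a, b⟩, hab⟩ ⟨⟨a', b'⟩, hab'⟩ h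
    simp only [f, Prod.mk.injEq, Fin.mk.injEq] at h hab hab'
    obtain ⟨rfl, h⟩ := h
    have := b.isLt; have := b'.isLt
    obtain rfl : b = b' := by ext; split_ifs at h <;> omega
    rfl
  simpa using Fintype.card_le_of_injective f hf

theorem bcn_gridGraph_le {r : ℕ} (hr : 1 ≤ r) :
    bcn (gridGraph (2 * r) (2 * r)) ≤ 2 * r * r - 1 := by
  calc bcn (gridGraph (2 * r) (2 * r))
      ≤ (2 * r - 1) + Fintype.card (OddOffDiagonal (2 * r)) := by
        simpa using isBicliqueCover_gridCover.bcn_le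
    _ ≤ (2 * r - 1) + 2 * r * (r - 1) := by gcongr; exact card_oddOffDiagonal_le r
    _ = 2 * r * r - 1 := by
        obtain ⟨s, rfl⟩ : ∃ s, r = s + 1 := ⟨r - 1, by omega⟩
        simp only [Nat.add_sub_cancel]; ring_nf; omega

end Cover

section FoolingSet

def natGrid : SimpleGraph (ℕ × ℕ) where
  Adj a b := Nat.dist a.1 b.1 + Nat.dist a.2 b.2 = 1
  symm := ⟨fun a b h => by rwa [Nat.dist_comm b.1, Nat.dist_comm b.2]⟩
  loopless := ⟨fun a h => by simp at h⟩

theorem natGrid_adj_iff {a b : ℕ × ℕ} :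
    natGrid.Adj a b ↔ a.1 = b.1 ∧ (a.2 + 1 = b.2 ∨ b.2 + 1 = a.2) ∨
      a.2 = b.2 ∧ (a.1 + 1 = b.1 ∨ b.1 + 1 = a.1) := by
  change Nat.dist _ _ + Nat.dist _ _ = 1 ↔ _
  simp only [Nat.dist]
  omega

def gridGraphEmbedding (p q : ℕ) : gridGraph p q ↪g natGrid where
  toFun v := (v.1, v.2)
  inj' v w h := by simpa [Prod.ext_iff, Fin.ext_iff] using h
  map_rel_iff' := Iff.rfl

/-- The vertices of the ring at depth `d` of the `p × p` grid are those with
`min (borderDist p x) (borderDist p y) = d`. -/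
def borderDist (p x : ℕ) : ℕ := min x (p - 1 - x)

theorem borderDist_cases {p x : ℕ} (hx : x < p) :
    borderDist p x = x ∧ 2 * x + 1 ≤ p ∨ borderDist p x + x + 1 = p ∧ p ≤ 2 * x + 1 := by
  unfold borderDist; omega

/-- The code `(x, y, true)` stands for the edge from `(x, y)` to `(x, y + 1)`, the code
`(x, y, false)` for the edge from `(x, y)` to `(x + 1, y)`. -/
def codeStart (c : ℕ × ℕ × Bool) : ℕ × ℕ := (c.1, c.2.1)

def codeEnd : ℕ × ℕ × Bool → ℕ × ℕ
  | (x, y, true) => (x, y + 1)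
  | (x, y, false) => (x + 1, y)

theorem natGrid_adj_codeStart_codeEnd (c : ℕ × ℕ × Bool) :
    natGrid.Adj (codeStart c) (codeEnd c) := by
  obtain ⟨x, y, _ | _⟩ := c <;> simp [natGrid_adj_iff, codeStart, codeEnd]

/-- The edges of the fooling set: on the ring at depth `d`, the edges along the two sides
`x = d`, `x = p - 1 - d` start at rows `y ≡ d (mod 2)`, and the edges along the two other sides
start at columns `x ≢ d (mod 2)`. Of the innermost ring only the edge in column `p/2 - 1` is
kept. -/
def IsFoolingCode (p : ℕ) : ℕ × ℕ × Bool → Prop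
  | (x, y, true) => x < p ∧ borderDist p x ≤ y ∧ y + 2 + borderDist p x ≤ p ∧
      y % 2 = borderDist p x % 2 ∧ 2 * x ≠ p
  | (x, y, false) => y < p ∧ borderDist p y < x ∧ x + 3 + borderDist p y ≤ p ∧
      x % 2 ≠ borderDist p y % 2

theorem IsFoolingCode.lt {p : ℕ} {c : ℕ × ℕ × Bool} (hc : IsFoolingCode p c) :
    (codeStart c).1 < p ∧ (codeStart c).2 < p ∧ (codeEnd c).1 < p ∧ (codeEnd c).2 < p := by
  obtain ⟨x, y, _ | _⟩ := c <;>
    simp only [IsFoolingCode, codeStart, codeEnd] at hc ⊢ <;> omega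

/-- Distinct parallel edges are linked only if they lie on one line with starts one apart, or on
adjacent lines with equal starts. Fooling edges on one line start at equal parities, and on
adjacent lines at opposite ones, as the depths differ by one; the exception, the middle pair of
columns, is why column `p / 2` carries none. -/
theorem eq_of_isFoolingCode_of_edgesLinked {p : ℕ} (hp : Even p) {c c' : ℕ × ℕ × Bool}
    (hc : IsFoolingCode p c) (hc' : IsFoolingCode p c')
    (h : EdgesLinked natGrid (codeStart c) (codeEnd c) (codeStart c') (codeEnd c')) :
    c = c' := by
  obtain ⟨r, rfl⟩ := hp
  obtain ⟨x, y, _ | _⟩ := c <;> obtain ⟨x', y', _ | _⟩ := c' <;>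
    simp only [IsFoolingCode, EdgesLinked, natGrid_adj_iff, codeStart, codeEnd,
      Prod.mk.injEq, and_true] at hc hc' h ⊢
  · have := borderDist_cases (p := r + r) (x := y) (by omega)
    have := borderDist_cases (p := r + r) (x := y') (by omega)
    omega
  · have := borderDist_cases (p := r + r) (x := y) (by omega)
    have := borderDist_cases (p := r + r) (x := x') (by omega)
    omega
  · have := borderDist_cases (p := r + r) (x := x) (by omega)
    have := borderDist_cases (p := r + r) (x := y') (by omega)
    omega
  · have := borderDist_cases (p := r + r) (x := x) (by omega)
    have := borderDist_cases (p := r + r) (x := x') (by omega)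
    omega

theorem isFoolingFamily_natGrid {κ : Type*} {p : ℕ} (hp : Even p)
    {code : κ → ℕ × ℕ × Bool} (hcode : ∀ m, IsFoolingCode p (code m))
    (hinj : Function.Injective code) :
    IsFoolingFamily natGrid (codeStart ∘ code) (codeEnd ∘ code) :=
  ⟨fun m => natGrid_adj_codeStart_codeEnd (code m), fun _ _ hne h =>
    hne (hinj (eq_of_isFoolingCode_of_edgesLinked hp (hcode _) (hcode _) h))⟩

/-- A point of `ℕ × ℕ` as a vertex of the `p × p` grid, with coordinates reduced mod `p`. -/
def toGrid (p : ℕ) [NeZero p] (a : ℕ × ℕ) : Fin p × Fin p :=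
  (Fin.ofNat p a.1, Fin.ofNat p a.2)

theorem gridGraphEmbedding_toGrid {p : ℕ} [NeZero p] {a : ℕ × ℕ} (h₁ : a.1 < p)
    (h₂ : a.2 < p) :
    gridGraphEmbedding p p (toGrid p a) = a :=
  Prod.ext (Nat.mod_eq_of_lt h₁) (Nat.mod_eq_of_lt h₂)

theorem isFoolingFamily_gridGraph {κ : Type*} {p : ℕ} [NeZero p] (hp : Even p)
    {code : κ → ℕ × ℕ × Bool} (hcode : ∀ m, IsFoolingCode p (code m))
    (hinj : Function.Injective code) :
    IsFoolingFamily (gridGraph p p) (toGrid p ∘ codeStart ∘ code)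
      (toGrid p ∘ codeEnd ∘ code) := by
  refine .of_embedding (gridGraphEmbedding p p) ?_
  convert isFoolingFamily_natGrid hp hcode hinj using 1 <;> funext m <;>
    obtain ⟨h₁, h₂, h₃, h₄⟩ := (hcode m).lt
  exacts [gridGraphEmbedding_toGrid h₁ h₂, gridGraphEmbedding_toGrid h₃ h₄]

/-- The number of fooling edges on the ring at depth `r - 1 - k` of the `2r × 2r` grid. -/
def ringSize (k : ℕ) : ℕ := if k = 0 then 1 else 4 * k + 2

theorem lt_ringSize_iff {k t : ℕ} : t < ringSize k ↔ t < 4 * k + 2 ∧ (k = 0 → t = 0) := by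
  unfold ringSize; split_ifs <;> omega

theorem sum_ringSize_add_one (n : ℕ) :
    ∑ k ∈ Finset.range (n + 1), ringSize k + 1 = 2 * (n + 1) * (n + 1) := by
  induction n with
  | zero => simp [ringSize]
  | succ n ih =>
    rw [Finset.sum_range_succ, add_right_comm, ih, ringSize, if_neg n.succ_ne_zero]
    ring

/-- The `t`-th fooling edge on the ring at depth `r - 1 - k` of the `2r × 2r` grid: its left,
right, top and bottom sides contribute `k + 1`, `k + 1`, `k` and `k` edges. -/
def ringCode (r k t : ℕ) : ℕ × ℕ × Bool :=
  if t ≤ k then (r - 1 - k, r - 1 - k + 2 * t, true)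
  else if t ≤ 2 * k + 1 then (r + k, r - 1 - k + 2 * (t - k - 1), true)
  else if t ≤ 3 * k + 1 then (r - k + 2 * (t - 2 * k - 2), r + k, false)
  else (r - k + 2 * (t - 3 * k - 2), r - 1 - k, false)

theorem isFoolingCode_ringCode {r k t : ℕ} (hk : k < r) (ht : t < ringSize k) :
    IsFoolingCode (2 * r) (ringCode r k t) := by
  rw [lt_ringSize_iff] at ht
  unfold ringCode
  split_ifs <;> simp only [IsFoolingCode] <;> unfold borderDist <;> omega

theorem ringCode_inj {r k t k' t' : ℕ} (hk : k < r) (ht : t < ringSize k) (hk' : k' < r)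
    (ht' : t' < ringSize k') (h : ringCode r k t = ringCode r k' t') : k = k' ∧ t = t' := by
  rw [lt_ringSize_iff] at ht ht'
  unfold ringCode at h
  split_ifs at h <;> simp only [Prod.mk.injEq] at h <;> omega

abbrev RingIndex (r : ℕ) : Type := (k : Fin r) × Fin (ringSize k)

theorem card_ringIndex {r : ℕ} (hr : 1 ≤ r) : Fintype.card (RingIndex r) = 2 * r * r - 1 := by
  obtain ⟨n, rfl⟩ : ∃ n, r = n + 1 := ⟨r - 1, by omega⟩
  simp only [RingIndex, Fintype.card_sigma, Fintype.card_fin]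
  have := sum_ringSize_add_one n
  rw [Fin.sum_univ_eq_sum_range ringSize]
  omega

theorem ringCode_injective (r : ℕ) :
    Function.Injective fun m : RingIndex r => ringCode r m.1 m.2 := by
  rintro ⟨⟨k, hk⟩, ⟨t, ht⟩⟩ ⟨⟨k', hk'⟩, ⟨t', ht'⟩⟩ h
  obtain ⟨rfl, rfl⟩ := ringCode_inj hk ht hk' ht' h
  rfl

theorem le_bcn_gridGraph {r : ℕ} (hr : 1 ≤ r) :
    2 * r * r - 1 ≤ bcn (gridGraph (2 * r) (2 * r)) := by
  have : NeZero (2 * r) := ⟨by omega⟩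
  rw [← card_ringIndex hr]
  exact isBicliqueCover_gridCover.card_le_bcn <| isFoolingFamily_gridGraph (even_two_mul r)
    (fun m => isFoolingCode_ringCode m.1.2 m.2.2) (ringCode_injective r)

end FoolingSet

theorem bc_grid_square (p : ℕ) (hp : 2 ≤ p) (heven : Even p) :
    bcn (gridGraph p p) = p * p / 2 - 1 := by
  obtain ⟨r, rfl⟩ := heven
  have hr : 1 ≤ r := by omega
  have hsize : (r + r) * (r + r) / 2 = 2 * r * r := by
    rw [← two_mul, mul_assoc, Nat.mul_div_cancel_left _ two_pos]; ring
  rw [hsize, ← two_mul]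
  exact le_antisymm (bcn_gridGraph_le hr) (le_bcn_gridGraph hr)
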